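/- The quartic form Ŝ(x) = -18 x1 x2 x3 x4 + 4√3 x1 x4³ - 4√3 x2³ x3 + 3 x2² x4² - 9 x1² x3² on ℂ^4 is invariant under the one-parameter groups generated by the matrices E_1, E_2, E_3 of the irreducible 4-dimensional sp(1)-representation; equivalently, the directional derivative of Ŝ at x in the direction E_s·x vanishes for all x ∈ ℂ^4 and s = 1, 2, 3. -/

import Mathlib

/-
The directional derivative `dŜ_x(E_s x)` is a quartic polynomial in `x` whose coefficients
involve `√3` only through `√3² = 3`; after expanding it vanishes identically. For `E₁` no
square root occurs at all: `E₁` is diagonal with weights `i·(-3, -1, 3, 1)/2`, and every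
monomial of `Ŝ` has total weight zero.
-/

noncomputable section
open Complex Matrix Finset

/-- The real number √3 viewed as a complex number. -/
def s3 : ℂ := (Real.sqrt 3 : ℝ)

/-- The matrices `E₁, E₂, E₃` of the irreducible 4-dimensional representation of `sp(1)`. -/
def E : Fin 3 → Matrix (Fin 4) (Fin 4) ℂ :=
  ![!![-3*I/2, 0, 0, 0;
      0, -I/2, 0, 0;
      0, 0, 3*I/2, 0;
      0, 0, 0, I/2],
    !![0, -s3/2, 0, 0;
      s3/2, 0, 0, 1;
      0, 0, 0, -s3/2;
      0, -1, s3/2, 0],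
    !![0, I*s3/2, 0, 0;
      I*s3/2, 0, 0, -I;
      0, 0, 0, -I*s3/2;
      0, -I, -I*s3/2, 0]]

/-- The quartic form of the cubic discriminant:
`Ŝ(x) = -18 x₁x₂x₃x₄ + 4√3 x₁x₄³ - 4√3 x₂³x₃ + 3 x₂²x₄² - 9 x₁²x₃²`. -/
def Q (x : Fin 4 → ℂ) : ℂ :=
  -18 * x 0 * x 1 * x 2 * x 3 + 4 * s3 * x 0 * (x 3)^3 - 4 * s3 * (x 1)^3 * x 2
    + 3 * (x 1)^2 * (x 3)^2 - 9 * (x 0)^2 * (x 2)^2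

theorem s3_sq : s3 ^ 2 = 3 := by
  rw [s3, ← ofReal_pow, Real.sq_sqrt (by norm_num : (0 : ℝ) ≤ 3)]
  norm_num

theorem fderiv_Q_apply (x v : Fin 4 → ℂ) :
    fderiv ℂ Q x v =
      -18 * (v 0 * x 1 * x 2 * x 3 + x 0 * v 1 * x 2 * x 3 + x 0 * x 1 * v 2 * x 3
        + x 0 * x 1 * x 2 * v 3)
      + 4 * s3 * (v 0 * x 3 ^ 3 + 3 * x 0 * x 3 ^ 2 * v 3)
      - 4 * s3 * (3 * x 1 ^ 2 * v 1 * x 2 + x 1 ^ 3 * v 2)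
      + 6 * (x 1 * v 1 * x 3 ^ 2 + x 1 ^ 2 * x 3 * v 3)
      - 18 * (x 0 * v 0 * x 2 ^ 2 + x 0 ^ 2 * x 2 * v 2) := by
  have h (i : Fin 4) : HasFDerivAt (fun y : Fin 4 → ℂ => y i) (ContinuousLinearMap.proj i) x :=
    hasFDerivAt_apply (𝕜 := ℂ) i x
  have hQ : HasFDerivAt Q _ x :=
    ((((((((h 0).const_mul (-18)).mul (h 1)).mul (h 2)).mul (h 3)).add
      (((h 0).const_mul (4 * s3)).mul ((h 3).pow 3))).sub
      ((((h 1).pow 3).const_mul (4 * s3)).mul (h 2))).add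
      ((((h 1).pow 2).const_mul 3).mul ((h 3).pow 2))).sub
      ((((h 0).pow 2).const_mul 9).mul ((h 2).pow 2))
  rw [hQ.fderiv]
  simp only [Pi.mul_apply, _root_.add_apply, _root_.sub_apply, _root_.smul_apply,
    ContinuousLinearMap.proj_apply, smul_eq_mul, nsmul_eq_mul]
  ring

/-- The quartic form `Ŝ` is infinitesimally invariant under the irreducible `sp(1)` action:
the directional derivative of `Ŝ` at `x` in the direction `E_s·x` vanishes for all
`x ∈ ℂ⁴` and `s = 1, 2, 3`. -/
theorem discriminant_infinitesimally_invariant :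
    ∀ (x : Fin 4 → ℂ) (s : Fin 3), fderiv ℂ Q x ((E s).mulVec x) = 0 := by
  intro x s
  rw [fderiv_Q_apply]
  fin_cases s <;>
    simp only [E, mulVec, dotProduct, Fin.sum_univ_four, of_apply, cons_val', cons_val_fin_one,
      cons_val_zero, cons_val_one, Matrix.cons_val, Fin.zero_eta, Fin.mk_one, Fin.reduceFinMk]
  · ring
  · linear_combination (-2 * x 1 * x 3 ^ 3 + 2 * x 1 ^ 3 * x 3 + 6 * x 0 * x 2 * x 3 ^ 2
      - 6 * x 0 * x 1 ^ 2 * x 2) * s3_sq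
  · linear_combination (2 * x 1 * x 3 ^ 3 + 2 * x 1 ^ 3 * x 3 - 6 * x 0 * x 2 * x 3 ^ 2
      - 6 * x 0 * x 1 ^ 2 * x 2) * I * s3_sq
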